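/- Let π* be an optimal policy (maximizing V^π(Ω) over all policies) and let S* be the set of non-terminal states appearing in the trajectory sets T_{Ω,t}^{π*} for 0 ≤ t ≤ τ_Ω^{π*} − 1. Then for every policy π and every l ∈ S*, V^π(l) ≤ V^{π*}(l). -/

import Mathlib

open Finset

/-- A branch: for each feature, either unused (`none`) or fixed to a category. -/
abbrev Branch (q : ℕ) (C : Fin q → ℕ) : Type := ∀ i : Fin q, Option (Fin (C i))

/-- States: `Sum.inl l` is the (non-terminal) branch `l`, `Sum.inr l` is its terminal state `l̄`. -/
abbrev BState (q : ℕ) (C : Fin q → ℕ) : Type := Branch q C ⊕ Branch q C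

/-- The root branch `Ω`. -/
def root (q : ℕ) (C : Fin q → ℕ) : Branch q C := fun _ => none

/-- The child of `l` obtained by fixing unused feature `i` to category `j`. -/
def child {q : ℕ} {C : Fin q → ℕ} (l : Branch q C) (i : Fin q) (j : Fin (C i)) : Branch q C :=
  Function.update l i (some j)

/-- `Children(l, i)`. -/
def childrenF {q : ℕ} {C : Fin q → ℕ} (l : Branch q C) (i : Fin q) : Finset (Branch q C) :=
  Finset.univ.image (fun j : Fin (C i) => child l i j)

/-- A policy: `act l = none` is the terminal action `ā`, `act l = some i` splits on the
unused feature `i`. -/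
structure Policy (q : ℕ) (C : Fin q → ℕ) where
  act : Branch q C → Option (Fin q)
  valid : ∀ l i, act l = some i → l i = none

/-- Transition set of the action taken by `π` at branch `l`. -/
def stepSet {q : ℕ} {C : Fin q → ℕ} (π : Policy q C) (l : Branch q C) : Finset (BState q C) :=
  match π.act l with
  | none => {Sum.inr l}
  | some i => (childrenF l i).image Sum.inl

/-- Trajectory of policy `π` from branch `l`. -/
def traj {q : ℕ} {C : Fin q → ℕ} (π : Policy q C) (l : Branch q C) : ℕ → Finset (BState q C)
  | 0 => {Sum.inl l}
  | t + 1 => (traj π l t).biUnion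
      (fun s => Sum.elim (fun lu => stepSet π lu) (fun lu => ({Sum.inr lu} : Finset (BState q C))) s)

/-- `τ_l^π`: minimal time `t ≥ 1` at which the trajectory consists of terminal states only. -/
noncomputable def tau {q : ℕ} {C : Fin q → ℕ} (π : Policy q C) (l : Branch q C) : ℕ :=
  sInf {t : ℕ | 1 ≤ t ∧ ∀ x ∈ traj π l t, x.isRight}

/-- A data point `x` is in branch `l`. -/
def inBranch {q : ℕ} {C : Fin q → ℕ} (l : Branch q C) (x : ∀ i : Fin q, Fin (C i)) : Prop :=
  ∀ (i : Fin q) (c : Fin (C i)), l i = some c → x i = c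

instance {q : ℕ} {C : Fin q → ℕ} (l : Branch q C) (x : ∀ i, Fin (C i)) :
    Decidable (inBranch l x) := by unfold inBranch; infer_instance

/-- `n(l)`: number of data points in `l`. -/
def nIn {q K : ℕ} {C : Fin q → ℕ} (D : Multiset ((∀ i : Fin q, Fin (C i)) × Fin K))
    (l : Branch q C) : ℕ :=
  (D.filter (fun p => inBranch l p.1)).card

/-- `n_k(l)`: number of data points in `l` of class `k`. -/
def nk {q K : ℕ} {C : Fin q → ℕ} (D : Multiset ((∀ i : Fin q, Fin (C i)) × Fin K))
    (l : Branch q C) (k : Fin K) : ℕ :=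
  (D.filter (fun p => inBranch l p.1 ∧ p.2 = k)).card

/-- `H(l) = (max_k n_k(l)) / n`. -/
noncomputable def Hb {q K : ℕ} {C : Fin q → ℕ} (D : Multiset ((∀ i : Fin q, Fin (C i)) × Fin K))
    (l : Branch q C) : ℝ :=
  ((Finset.univ.sup (fun k : Fin K => nk D l k) : ℕ) : ℝ) / (Multiset.card D : ℝ)

/-- Reward collected at a state of the trajectory: `H(l)` for the terminal action,
`-λ` for a split action, `0` at terminal states. -/
noncomputable def rew {q K : ℕ} {C : Fin q → ℕ}
    (D : Multiset ((∀ i : Fin q, Fin (C i)) × Fin K)) (lam : ℝ) (π : Policy q C) :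
    BState q C → ℝ
  | Sum.inl lu => match π.act lu with
      | none => Hb D lu
      | some _ => -lam
  | Sum.inr _ => 0

/-- Value `V^π(l)`. -/
noncomputable def V {q K : ℕ} {C : Fin q → ℕ}
    (D : Multiset ((∀ i : Fin q, Fin (C i)) × Fin K)) (lam : ℝ)
    (π : Policy q C) (l : Branch q C) : ℝ :=
  ∑ t ∈ Finset.range (tau π l), ∑ x ∈ traj π l t, rew D lam π x

/-- State-action value `Q^π(l, a)`. -/
noncomputable def Qv {q K : ℕ} {C : Fin q → ℕ}
    (D : Multiset ((∀ i : Fin q, Fin (C i)) × Fin K)) (lam : ℝ)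
    (π : Policy q C) (l : Branch q C) : Option (Fin q) → ℝ
  | none => Hb D l
  | some i => -lam + ∑ j : Fin (C i), V D lam π (child l i j)

/-- The available actions `A(l)`. -/
def Avail {q : ℕ} {C : Fin q → ℕ} (l : Branch q C) : Finset (Option (Fin q)) :=
  insert none ((Finset.univ.filter (fun i : Fin q => l i = none)).image some)

theorem Avail_nonempty {q : ℕ} {C : Fin q → ℕ} (l : Branch q C) : (Avail l).Nonempty :=
  ⟨none, Finset.mem_insert_self _ _⟩

/-- The sub-DT of `π` rooted in `l`: the branches whose terminal states constitute
the trajectory at time `τ_l^π`. -/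
noncomputable def subDTof {q : ℕ} {C : Fin q → ℕ} (π : Policy q C) (l : Branch q C) : Finset (Branch q C) :=
  (traj π l (tau π l)).image (Sum.elim id id)

/-- `SubDT l T m`: `T` is a sub-DT rooted in `l` obtained by `m` split operations. -/
inductive SubDT {q : ℕ} {C : Fin q → ℕ} : Branch q C → Finset (Branch q C) → ℕ → Prop
  | leaf (l : Branch q C) : SubDT l {l} 0
  | split (l : Branch q C) (T : Finset (Branch q C)) (m : ℕ) (l' : Branch q C) (i : Fin q)
      (hT : SubDT l T m) (hmem : l' ∈ T) (hnone : l' i = none) :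
      SubDT l (T.erase l' ∪ childrenF l' i) (m + 1)

/-- `H(T) = ∑_{l ∈ T} H(l)`. -/
noncomputable def HT {q K : ℕ} {C : Fin q → ℕ}
    (D : Multiset ((∀ i : Fin q, Fin (C i)) × Fin K)) (T : Finset (Branch q C)) : ℝ :=
  ∑ l ∈ T, Hb D l

/-- `splits(l)`: number of features used by branch `l`. -/
def nsplits {q : ℕ} {C : Fin q → ℕ} (l : Branch q C) : ℕ :=
  (Finset.univ.filter (fun i : Fin q => l i ≠ none)).card

/-!
Let `π'` follow `π` below `l` and `πs` elsewhere. The value of a policy obeys the Bellman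
recursion `V(l) = -λ + ∑ⱼ V(child l i j)` at a split, and the value below a branch only depends
on the actions taken at its descendants. Since `l` is reached by `πs` from the root, every branch
splitting off the path from the root to `l` is handled identically by `π'` and `πs`, so
`V^{π'}(Ω) - V^{πs}(Ω) = V^{π'}(l) - V^{πs}(l) = V^π(l) - V^{πs}(l)`, and optimality of `πs`
makes the left side nonpositive.
-/

variable {q : ℕ} {C : Fin q → ℕ}

def IsDescendant (l b : Branch q C) : Prop := ∀ i c, l i = some c → b i = some c

instance (l b : Branch q C) : Decidable (IsDescendant l b) := by
  unfold IsDescendant; infer_instance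

namespace IsDescendant

lemma refl (l : Branch q C) : IsDescendant l l := fun _ _ h => h

lemma trans {a b c : Branch q C} (hab : IsDescendant a b) (hbc : IsDescendant b c) :
    IsDescendant a c :=
  fun i x hx => hbc i x (hab i x hx)

end IsDescendant

lemma child_apply_self (l : Branch q C) (i : Fin q) (j : Fin (C i)) : child l i j i = some j :=
  Function.update_self i _ l

lemma isDescendant_child {l : Branch q C} {i : Fin q} (h : l i = none) (j : Fin (C i)) :
    IsDescendant l (child l i j) := by
  intro i' c hc
  have hne : i' ≠ i := by rintro rfl; simp [h] at hc
  rwa [child, Function.update_of_ne hne]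

lemma IsDescendant.apply_eq_of_child {l b : Branch q C} {i : Fin q} {j : Fin (C i)}
    (h : IsDescendant (child l i j) b) : b i = some j :=
  h i j (child_apply_self l i j)

lemma nsplits_child {l : Branch q C} {i : Fin q} (h : l i = none) (j : Fin (C i)) :
    nsplits (child l i j) = nsplits l + 1 := by
  have hfeat : (univ.filter fun i' => child l i j i' ≠ none)
      = insert i (univ.filter fun i' => l i' ≠ none) := by
    ext i'
    rcases eq_or_ne i' i with rfl | hne
    · simp [child_apply_self]
    · simp only [mem_filter, mem_insert, mem_univ, true_and, hne, false_or]
      rw [child, Function.update_of_ne hne]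
  rw [nsplits, nsplits, hfeat, card_insert_of_notMem (by simp [h])]

lemma nsplits_le (l : Branch q C) : nsplits l ≤ q :=
  (card_filter_le _ _).trans (by simp)

def BState.branch : BState q C → Branch q C := Sum.elim id id

def succStates (π : Policy q C) : BState q C → Finset (BState q C) :=
  Sum.elim (stepSet π) fun b => {Sum.inr b}

section Trajectory

variable (π : Policy q C)

@[simp] lemma traj_zero (l : Branch q C) : traj π l 0 = {Sum.inl l} := rfl

lemma traj_succ (l : Branch q C) (t : ℕ) :
    traj π l (t + 1) = (traj π l t).biUnion (succStates π) := rfl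

variable {π}

lemma traj_succ_of_act_none {l : Branch q C} (h : π.act l = none) (t : ℕ) :
    traj π l (t + 1) = {Sum.inr l} := by
  induction t with
  | zero => simp [traj, stepSet, h]
  | succ t ih => rw [traj_succ, ih]; simp [succStates]

lemma traj_succ_of_act_some {l : Branch q C} {i : Fin q} (h : π.act l = some i) (t : ℕ) :
    traj π l (t + 1) = univ.biUnion fun j => traj π (child l i j) t := by
  induction t with
  | zero => ext x; simp [traj, stepSet, h, childrenF, eq_comm]
  | succ t ih => rw [traj_succ, ih, biUnion_biUnion]; rfl

lemma isDescendant_branch_of_mem_traj {l : Branch q C} {t : ℕ} {x : BState q C}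
    (hx : x ∈ traj π l t) : IsDescendant l x.branch := by
  induction t generalizing l with
  | zero => rw [traj_zero, mem_singleton] at hx; subst hx; exact .refl l
  | succ t ih =>
    cases h : π.act l with
    | none => rw [traj_succ_of_act_none h, mem_singleton] at hx; subst hx; exact .refl l
    | some i =>
      obtain ⟨j, -, hx⟩ := mem_biUnion.mp (traj_succ_of_act_some h t ▸ hx)
      exact (isDescendant_child (π.valid l i h) j).trans (ih hx)

lemma pairwiseDisjoint_traj_child (l : Branch q C) (i : Fin q) (t : ℕ) :
    ((univ : Finset (Fin (C i))) : Set (Fin (C i))).PairwiseDisjoint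
      fun j => traj π (child l i j) t := by
  intro j _ j' _ hne
  refine disjoint_left.mpr fun x hj hj' => hne ?_
  have hxj := (isDescendant_branch_of_mem_traj hj).apply_eq_of_child
  have hxj' := (isDescendant_branch_of_mem_traj hj').apply_eq_of_child
  exact Option.some_injective _ (hxj.symm.trans hxj')

lemma nsplits_add_le_of_inl_mem_traj {l b : Branch q C} {t : ℕ}
    (hb : Sum.inl b ∈ traj π l t) : nsplits l + t ≤ nsplits b := by
  induction t generalizing l with
  | zero => rw [traj_zero, mem_singleton, Sum.inl.injEq] at hb; rw [hb, add_zero]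
  | succ t ih =>
    cases h : π.act l with
    | none => simp [traj_succ_of_act_none h] at hb
    | some i =>
      obtain ⟨j, -, hb⟩ := mem_biUnion.mp (traj_succ_of_act_some h t ▸ hb)
      have := ih hb
      rw [nsplits_child (π.valid l i h)] at this
      omega

lemma forall_isRight_traj_succ {l : Branch q C} {t : ℕ} (h : ∀ x ∈ traj π l t, x.isRight) :
    ∀ x ∈ traj π l (t + 1), x.isRight := by
  intro x hx
  obtain ⟨y, hy, hx⟩ := mem_biUnion.mp hx
  cases y with
  | inl b => exact absurd (h _ hy) (by simp)
  | inr b => simp only [Sum.elim_inr, mem_singleton] at hx; rw [hx]; rfl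

end Trajectory

section Termination

variable (π : Policy q C) (l : Branch q C)

lemma forall_isRight_traj_q_succ : ∀ x ∈ traj π l (q + 1), x.isRight := by
  rintro (b | b) hb
  · have := nsplits_add_le_of_inl_mem_traj hb
    have := nsplits_le b
    omega
  · rfl

lemma tau_le : tau π l ≤ q + 1 := by
  refine Nat.sInf_le ?_
  exact ⟨by omega, forall_isRight_traj_q_succ π l⟩

lemma forall_isRight_traj_of_tau_le {t : ℕ} (ht : tau π l ≤ t) :
    ∀ x ∈ traj π l t, x.isRight := by
  induction t, ht using Nat.le_induction with
  | base =>
    exact (Nat.sInf_mem (s := {t | 1 ≤ t ∧ ∀ x ∈ traj π l t, x.isRight})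
      ⟨q + 1, by omega, forall_isRight_traj_q_succ π l⟩).2
  | succ t _ ih => exact forall_isRight_traj_succ ih

end Termination

section Value

variable {K : ℕ} (D : Multiset ((∀ i : Fin q, Fin (C i)) × Fin K)) (lam : ℝ)

lemma V_eq_sum_range {π : Policy q C} {l : Branch q C} {N : ℕ} (hN : q + 1 ≤ N) :
    V D lam π l = ∑ t ∈ range N, ∑ x ∈ traj π l t, rew D lam π x := by
  refine sum_subset (range_subset_range.mpr ((tau_le π l).trans hN)) fun t _ ht => ?_
  refine sum_eq_zero fun x hx => ?_
  have hx := forall_isRight_traj_of_tau_le π l (not_lt.mp (mem_range.not.mp ht)) x hx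
  cases x with
  | inl b => simp at hx
  | inr b => rfl

lemma V_eq_Qv (π : Policy q C) (l : Branch q C) : V D lam π l = Qv D lam π l (π.act l) := by
  cases h : π.act l with
  | none =>
    rw [V_eq_sum_range D lam le_rfl, sum_range_succ']
    simp [traj_succ_of_act_none h, rew, h, Qv]
  | some i =>
    rw [V_eq_sum_range D lam (Nat.le_succ (q + 1)), sum_range_succ']
    simp only [traj_succ_of_act_some h, sum_biUnion (pairwiseDisjoint_traj_child l i _),
      traj_zero, sum_singleton]
    rw [sum_comm, Qv]
    simp only [← V_eq_sum_range D lam (le_refl (q + 1))]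
    simp only [rew, h, add_comm]

lemma traj_congr {π₁ π₂ : Policy q C} {l : Branch q C}
    (h : ∀ b, IsDescendant l b → π₁.act b = π₂.act b) (t : ℕ) :
    traj π₁ l t = traj π₂ l t := by
  induction t generalizing l with
  | zero => rfl
  | succ t ih =>
    have hl := h l (.refl l)
    cases h₁ : π₁.act l with
    | none => rw [traj_succ_of_act_none h₁, traj_succ_of_act_none (hl ▸ h₁)]
    | some i =>
      rw [traj_succ_of_act_some h₁, traj_succ_of_act_some (hl ▸ h₁)]
      exact biUnion_congr rfl fun j _ =>
        ih fun b hb => h b ((isDescendant_child (π₁.valid l i h₁) j).trans hb)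

lemma V_congr {π₁ π₂ : Policy q C} {l : Branch q C}
    (h : ∀ b, IsDescendant l b → π₁.act b = π₂.act b) : V D lam π₁ l = V D lam π₂ l := by
  rw [V_eq_sum_range D lam le_rfl, V_eq_sum_range D lam le_rfl]
  refine sum_congr rfl fun t _ => ?_
  rw [traj_congr h]
  refine sum_congr rfl fun x hx => ?_
  cases x with
  | inl b => simp only [rew, h b (isDescendant_branch_of_mem_traj hx)]
  | inr b => rfl

lemma V_sub_V_eq_of_inl_mem_traj {π σ : Policy q C} {r l : Branch q C} {t : ℕ}
    (hl : Sum.inl l ∈ traj σ r t) (h : ∀ b, ¬ IsDescendant l b → π.act b = σ.act b) :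
    V D lam π r - V D lam σ r = V D lam π l - V D lam σ l := by
  induction t generalizing r with
  | zero => rw [traj_zero, mem_singleton, Sum.inl.injEq] at hl; rw [hl]
  | succ t ih =>
    cases hσ : σ.act r with
    | none => simp [traj_succ_of_act_none hσ] at hl
    | some i =>
      obtain ⟨j, -, hl⟩ := mem_biUnion.mp (traj_succ_of_act_some hσ t ▸ hl)
      -- every descendant of `l` fixes feature `i` to `j`, so neither `r` nor the other
      -- children of `r` lie below `l`
      have hli : l i = some j := (isDescendant_branch_of_mem_traj hl).apply_eq_of_child
      have hπ : π.act r = some i := by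
        refine (h r fun hr => ?_).trans hσ
        simpa [σ.valid r i hσ] using hr i j hli
      have hsib : ∀ j' ≠ j, V D lam π (child r i j') - V D lam σ (child r i j') = 0 :=
        fun j' hj' => sub_eq_zero.mpr <| V_congr D lam fun b hb => h b fun hlb =>
          hj' (Option.some_injective _ (hb.apply_eq_of_child.symm.trans (hlb i j hli)))
      rw [V_eq_Qv D lam π r, V_eq_Qv D lam σ r, hπ, hσ, ← ih hl, Qv, Qv,
        ← sum_eq_single j (fun j' _ hj' => hsib j' hj') (absurd (mem_univ j)), sum_sub_distrib]
      ring

end Value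

def Policy.graft (l : Branch q C) (π σ : Policy q C) : Policy q C where
  act b := if IsDescendant l b then π.act b else σ.act b
  valid b i h := by
    split_ifs at h
    exacts [π.valid b i h, σ.valid b i h]

theorem optimal_policy_dominates_on_relevant_states_general {q K : ℕ}
    {C : Fin q → ℕ}
    (D : Multiset ((∀ i : Fin q, Fin (C i)) × Fin K))
    (lam : ℝ)
    (πs : Policy q C)
    (hopt : ∀ π : Policy q C, V D lam π (root q C) ≤ V D lam πs (root q C))
    (π : Policy q C) (l : Branch q C)
    (hl : ∃ t < tau πs (root q C), Sum.inl l ∈ traj πs (root q C) t) :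
    V D lam π l ≤ V D lam πs l := by
  obtain ⟨t, -, hmem⟩ := hl
  have hgraft_l : V D lam (Policy.graft l π πs) l = V D lam π l :=
    V_congr D lam fun _ hb => if_pos hb
  have hgraft_root := V_sub_V_eq_of_inl_mem_traj D lam hmem (π := Policy.graft l π πs)
    fun _ hb => if_neg hb
  linarith [hopt (Policy.graft l π πs)]

/-- If `πs` is optimal and `l` is a non-terminal state appearing in
the trajectory of `πs` from the root (before time `τ_Ω^{πs}`), then for any policy
`π`, `V^π(l) ≤ V^{πs}(l)`. -/
theorem optimal_policy_dominates_on_relevant_states {q K : ℕ} (hq : 2 ≤ q) (hK : 2 ≤ K)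
    {C : Fin q → ℕ} (hC : ∀ i, 2 ≤ C i)
    (D : Multiset ((∀ i : Fin q, Fin (C i)) × Fin K)) (hD : D ≠ 0)
    (lam : ℝ) (hlam0 : 0 < lam) (hlam1 : lam < 1)
    (πs : Policy q C)
    (hopt : ∀ π : Policy q C, V D lam π (root q C) ≤ V D lam πs (root q C))
    (π : Policy q C) (l : Branch q C)
    (hl : ∃ t < tau πs (root q C), Sum.inl l ∈ traj πs (root q C) t) :
    V D lam π l ≤ V D lam πs l :=
  optimal_policy_dominates_on_relevant_states_general D lam πs hopt π l hl
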